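/- arXiv:2204.13186 — 2 statements merged into one kernel-verified Lean document; each statement's English description precedes it below -/
import Mathlib

section
/- Let Γ be a distance-biregular graph, ℓ ∈ {0,1}, x ∈ V_ℓ, and for 0 ≤ i ≤ D_ℓ set m_{ℓ,i} = |{y ∈ V : ν^x(y) = q_{ℓ,i}}|. Then for every 0 ≤ i ≤ D_ℓ − 1: k_{ℓ,i} = m_{ℓ,i}, b_{ℓ,i} = (Σ_{j=i+1}^{D_ℓ} m_{ℓ,j}) / (m_{ℓ,i}·(q_{ℓ,i+1} − q_{ℓ,i})), and c_{ℓ,i+1} = (Σ_{j=i+1}^{D_ℓ} m_{ℓ,j}) / (m_{ℓ,i+1}·(q_{ℓ,i+1} − q_{ℓ,i})). -/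
/-!
Around a distance-regularized vertex `x` the radial function `y ↦ q (d(x, y))` has Laplacian `1`
away from `x`. On the sphere of radius `j` it equals `c_j (q_j - q_{j-1}) - b_j (q_{j+1} - q_j)`;
by the definition of `q` and the double count `s_j b_j = s_{j+1} c_{j+1}` of the edges between
consecutive spheres this is `(T_j - T_{j+1}) / s_j = 1`, where `T_j` counts the vertices at distance
at least `j`. Column sums of a Laplacian vanish and on a connected graph its kernel consists of the
constants, so the equilibrium measure `ν^x` is this radial function. As `q` is strictly increasing
up to the eccentricity `D`, the level sets of `ν^x` are the spheres about `x`, and the formulas for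
`b_i` and `c_{i+1}` are the identities above.
-/

open Finset SimpleGraph Matrix

-- The value `q_m` of the equilibrium measure on the sphere of radius `m`, for a graph on `n`
-- vertices with sphere sizes `s` and intersection numbers `c`.
noncomputable def levelPotential (n : ℕ) (s c : ℕ → ℕ) (m : ℕ) : ℝ :=
  ∑ j ∈ Icc 1 m, ((n : ℝ) - ∑ t ∈ range j, (s t : ℝ)) / ((s j : ℝ) * (c j : ℝ))

@[simp]
theorem levelPotential_zero (n : ℕ) (s c : ℕ → ℕ) : levelPotential n s c 0 = 0 := by
  simp [levelPotential]

theorem levelPotential_succ_sub (n : ℕ) (s c : ℕ → ℕ) (m : ℕ) :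
    levelPotential n s c (m + 1) - levelPotential n s c m =
      ((n : ℝ) - ∑ t ∈ range (m + 1), (s t : ℝ)) /
        ((s (m + 1) : ℝ) * (c (m + 1) : ℝ)) := by
  rw [levelPotential, levelPotential, sum_Icc_succ_top (by omega), add_sub_cancel_left]

namespace SimpleGraph

variable {V : Type*} {G : SimpleGraph V}

section Laplacian

variable [Fintype V] [DecidableEq V] [DecidableRel G.Adj]

theorem sum_lapMatrix_mulVec {R : Type*} [CommRing R] (v : V → R) :
    ∑ y, (G.lapMatrix R *ᵥ v) y = 0 := by
  calc ∑ y, (G.lapMatrix R *ᵥ v) y = (fun _ ↦ 1) ⬝ᵥ (G.lapMatrix R *ᵥ v) := by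
        simp [dotProduct]
    _ = (G.lapMatrix R *ᵥ fun _ ↦ 1) ⬝ᵥ v := by
        rw [dotProduct_mulVec, ← mulVec_transpose, (G.isSymm_lapMatrix R).eq]
    _ = 0 := by rw [lapMatrix_mulVec_const_eq_zero, zero_dotProduct]

theorem Connected.eq_of_lapMatrix_mulVec_eq_of_ne (hG : G.Connected) {x : V} {u v : V → ℝ}
    (hx : u x = v x)
    (h : ∀ y, y ≠ x → (G.lapMatrix ℝ *ᵥ u) y = (G.lapMatrix ℝ *ᵥ v) y) :
    u = v := by
  have hoff : ∀ y, y ≠ x → (G.lapMatrix ℝ *ᵥ (u - v)) y = 0 := fun y hy ↦ by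
    rw [mulVec_sub, Pi.sub_apply, h y hy, sub_self]
  -- the total sum of a Laplacian vanishes, so `L (u - v)` also vanishes at `x`
  have hzero : G.lapMatrix ℝ *ᵥ (u - v) = 0 := by
    have hsum := sum_lapMatrix_mulVec (G := G) (u - v)
    rw [← add_sum_erase _ _ (mem_univ x), sum_eq_zero fun y hy ↦ hoff y (ne_of_mem_erase hy),
      add_zero] at hsum
    ext y
    by_cases hy : y = x
    · rw [hy, hsum, Pi.zero_apply]
    · exact hoff y hy
  ext y
  have := (lapMatrix_mulVec_eq_zero_iff_forall_reachable G).1 hzero y x (hG y x)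
  rwa [Pi.sub_apply, Pi.sub_apply, hx, sub_self, sub_eq_zero] at this

end Laplacian

theorem Connected.exists_adj_dist_add_one_eq (hG : G.Connected) {x y : V} (hy : y ≠ x) :
    ∃ z, G.Adj y z ∧ G.dist x z + 1 = G.dist x y := by
  obtain ⟨w, hw⟩ := hG.exists_walk_length_eq_dist y x
  cases w with
  | nil => exact absurd rfl hy
  | cons hadj p =>
    refine ⟨_, hadj, ?_⟩
    have hp := dist_le p.reverse
    have hpos := hG.pos_dist_of_ne hy.symm
    rw [Walk.length_reverse] at hp
    rw [Walk.length_cons, dist_comm] at hw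
    rcases hadj.diff_dist_adj (u := x) with h | h | h <;> omega

theorem Connected.exists_dist_eq_of_le (hG : G.Connected) {x y : V} {i : ℕ}
    (hi : i ≤ G.dist x y) : ∃ z, G.dist x z = i := by
  obtain ⟨n, hn⟩ := Nat.exists_eq_add_of_le hi
  induction n generalizing y with
  | zero => exact ⟨y, hn⟩
  | succ n ih =>
    have hy : y ≠ x := by rintro rfl; simp at hn
    obtain ⟨z, -, hz⟩ := hG.exists_adj_dist_add_one_eq hy
    exact ih (y := z) (by omega) (by omega)

variable [Fintype V] [DecidableRel G.Adj]

theorem filter_neighborFinset (y : V) (p : V → Prop) [DecidablePred p] :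
    (G.neighborFinset y).filter p = ({z | p z ∧ G.Adj y z} : Finset V) := by
  ext z
  simp [and_comm]

structure IsDistanceRegularizedAt (G : SimpleGraph V) [DecidableRel G.Adj] (x : V)
    (s c b : ℕ → ℕ) : Prop where
  card_sphere : ∀ i, #{y | G.dist x y = i} = s i
  card_down : ∀ y i, G.dist x y = i → #{z | G.dist x z = i - 1 ∧ G.Adj y z} = c i
  card_up : ∀ y i, G.dist x y = i → #{z | G.dist x z = i + 1 ∧ G.Adj y z} = b i

namespace IsDistanceRegularizedAt

variable {x : V} {s c b : ℕ → ℕ} {D : ℕ}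

theorem card_sphere_mul_up (h : G.IsDistanceRegularizedAt x s c b) (i : ℕ) :
    s i * b i = s (i + 1) * c (i + 1) := by
  have hcount := sum_card_bipartiteAbove_eq_sum_card_bipartiteBelow (r := G.Adj)
    (s := {y | G.dist x y = i}) (t := {z | G.dist x z = i + 1})
  simp only [bipartiteAbove, bipartiteBelow, filter_filter] at hcount
  rw [sum_const_nat fun y hy ↦ h.card_up y i (mem_filter.1 hy).2,
    sum_const_nat fun z hz ↦ ?_, h.card_sphere, h.card_sphere] at hcount
  · exact hcount
  · rw [← h.card_down z (i + 1) (mem_filter.1 hz).2, Nat.add_sub_cancel]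
    simp only [G.adj_comm]

theorem card_sphere_pos (h : G.IsDistanceRegularizedAt x s c b) (hG : G.Connected)
    (hecc : ∃ y, G.dist x y = D) {i : ℕ} (hi : i ≤ D) : 0 < s i := by
  obtain ⟨y, rfl⟩ := hecc
  obtain ⟨z, hz⟩ := hG.exists_dist_eq_of_le hi
  rw [← h.card_sphere]
  exact card_pos.2 ⟨z, mem_filter.2 ⟨mem_univ z, hz⟩⟩

theorem down_pos (h : G.IsDistanceRegularizedAt x s c b) (hG : G.Connected)
    (hecc : ∃ y, G.dist x y = D) {i : ℕ} (hi₁ : 1 ≤ i) (hi : i ≤ D) : 0 < c i := by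
  obtain ⟨y₀, rfl⟩ := hecc
  obtain ⟨y, hy⟩ := hG.exists_dist_eq_of_le hi
  have hyx : y ≠ x := by rintro rfl; rw [dist_self] at hy; omega
  obtain ⟨z, hadj, hz⟩ := hG.exists_adj_dist_add_one_eq hyx
  rw [← h.card_down y i hy]
  exact card_pos.2 ⟨z, mem_filter.2 ⟨mem_univ z, by omega, hadj⟩⟩

theorem sum_range_card_sphere (h : G.IsDistanceRegularizedAt x s c b)
    (hD : ∀ y, G.dist x y ≤ D) : ∑ t ∈ range (D + 1), s t = Fintype.card V := by
  rw [← card_univ, card_eq_sum_card_fiberwise (f := G.dist x) (t := range (D + 1))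
    fun y _ ↦ by simpa [Nat.lt_succ_iff] using hD y]
  exact sum_congr rfl fun t _ ↦ (h.card_sphere t).symm

theorem card_sub_sum_range (h : G.IsDistanceRegularizedAt x s c b)
    (hD : ∀ y, G.dist x y ≤ D) {j : ℕ} (hj : j ≤ D + 1) :
    (Fintype.card V : ℝ) - ∑ t ∈ range j, (s t : ℝ) = ∑ t ∈ Icc j D, (s t : ℝ) := by
  rw [← h.sum_range_card_sphere hD, Nat.cast_sum, ← sum_range_add_sum_Ico _ hj,
    Ico_add_one_right_eq_Icc, add_sub_cancel_left]

theorem potential_succ_sub (h : G.IsDistanceRegularizedAt x s c b) (hD : ∀ y, G.dist x y ≤ D)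
    {i : ℕ} (hi : i ≤ D) :
    levelPotential (Fintype.card V) s c (i + 1) - levelPotential (Fintype.card V) s c i =
      (∑ t ∈ Icc (i + 1) D, (s t : ℝ)) / ((s (i + 1) : ℝ) * (c (i + 1) : ℝ)) := by
  rw [levelPotential_succ_sub, h.card_sub_sum_range hD (by omega)]

theorem card_sphere_mul_down_mul_potential_sub (h : G.IsDistanceRegularizedAt x s c b)
    (hG : G.Connected) (hD : ∀ y, G.dist x y ≤ D) (hecc : ∃ y, G.dist x y = D) {i : ℕ}
    (hi : i < D) :
    (s (i + 1) : ℝ) * c (i + 1) *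
        (levelPotential (Fintype.card V) s c (i + 1) - levelPotential (Fintype.card V) s c i) =
      ∑ t ∈ Icc (i + 1) D, (s t : ℝ) := by
  have hs : (s (i + 1) : ℝ) ≠ 0 := by exact_mod_cast (h.card_sphere_pos hG hecc hi).ne'
  have hc : (c (i + 1) : ℝ) ≠ 0 := by exact_mod_cast (h.down_pos hG hecc (by omega) hi).ne'
  rw [h.potential_succ_sub hD hi.le, mul_div_cancel₀ _ (mul_ne_zero hs hc)]

theorem card_sphere_mul_up_mul_potential_sub (h : G.IsDistanceRegularizedAt x s c b)
    (hG : G.Connected) (hD : ∀ y, G.dist x y ≤ D) (hecc : ∃ y, G.dist x y = D) {i : ℕ}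
    (hi : i ≤ D) :
    (s i : ℝ) * b i *
        (levelPotential (Fintype.card V) s c (i + 1) - levelPotential (Fintype.card V) s c i) =
      ∑ t ∈ Icc (i + 1) D, (s t : ℝ) := by
  rcases hi.lt_or_eq with hi | rfl
  · rw [← Nat.cast_mul, h.card_sphere_mul_up, Nat.cast_mul]
    exact h.card_sphere_mul_down_mul_potential_sub hG hD hecc hi
  · -- nothing lies beyond distance `D`, so the increment of the potential vanishes
    rw [h.potential_succ_sub hD le_rfl]
    simp

theorem strictMonoOn_potential (h : G.IsDistanceRegularizedAt x s c b) (hG : G.Connected)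
    (hD : ∀ y, G.dist x y ≤ D) (hecc : ∃ y, G.dist x y = D) :
    StrictMonoOn (levelPotential (Fintype.card V) s c) (Set.Iic D) := by
  refine strictMonoOn_Iic_of_lt_succ fun i hi ↦ ?_
  rw [Order.succ_eq_add_one, ← sub_pos, h.potential_succ_sub hD hi.le]
  have hs : ∀ t ≤ D, (0 : ℝ) < s t := fun t ht ↦ by
    exact_mod_cast h.card_sphere_pos hG hecc ht
  have hc : (0 : ℝ) < c (i + 1) := by exact_mod_cast h.down_pos hG hecc (by omega) hi
  exact div_pos
    (sum_pos (fun t ht ↦ hs t (mem_Icc.1 ht).2) ⟨i + 1, mem_Icc.2 ⟨le_rfl, hi⟩⟩)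
    (mul_pos (hs _ hi) hc)

theorem sum_neighborFinset_comp_dist {M : Type*} [AddCommMonoid M]
    (h : G.IsDistanceRegularizedAt x s c b) (y : V) {φ : ℕ → M} (hφ : φ (G.dist x y) = 0) :
    ∑ z ∈ G.neighborFinset y, φ (G.dist x z) =
      c (G.dist x y) • φ (G.dist x y - 1) + b (G.dist x y) • φ (G.dist x y + 1) := by
  -- a neighbour of `y` lies on the sphere of `y` or on one of the two adjacent spheres
  have hsplit : ∀ z ∈ G.neighborFinset y, φ (G.dist x z) =
      (if G.dist x z = G.dist x y - 1 then φ (G.dist x y - 1) else 0) +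
        (if G.dist x z = G.dist x y + 1 then φ (G.dist x y + 1) else 0) := by
    intro z hz
    have hadj := (G.mem_neighborFinset y z).1 hz
    split_ifs with hdown hup hup
    · omega
    · rw [hdown, add_zero]
    · rw [hup, zero_add]
    · have hsame : G.dist x z = G.dist x y := by have := hadj.diff_dist_adj (u := x); omega
      rw [hsame, hφ, add_zero]
  rw [sum_congr rfl hsplit, sum_add_distrib, ← sum_filter, ← sum_filter, sum_const, sum_const,
    filter_neighborFinset, filter_neighborFinset, h.card_down y _ rfl, h.card_up y _ rfl]

theorem natCard_potential_dist_eq (h : G.IsDistanceRegularizedAt x s c b) (hG : G.Connected)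
    (hD : ∀ y, G.dist x y ≤ D) (hecc : ∃ y, G.dist x y = D) {j : ℕ} (hj : j ≤ D) :
    Nat.card {y // levelPotential (Fintype.card V) s c (G.dist x y) =
      levelPotential (Fintype.card V) s c j} = s j := by
  rw [Nat.card_congr (Equiv.subtypeEquivRight fun y ↦
      (h.strictMonoOn_potential hG hD hecc).injOn.eq_iff (hD y) hj),
    Nat.card_eq_fintype_card, Fintype.card_subtype, h.card_sphere]

variable [DecidableEq V]

theorem lapMatrix_mulVec_potential_dist (h : G.IsDistanceRegularizedAt x s c b)
    (hG : G.Connected) (hD : ∀ y, G.dist x y ≤ D) (hecc : ∃ y, G.dist x y = D) {y : V}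
    (hy : y ≠ x) :
    (G.lapMatrix ℝ *ᵥ fun z ↦ levelPotential (Fintype.card V) s c (G.dist x z)) y = 1 := by
  set q := levelPotential (Fintype.card V) s c
  obtain ⟨i, hi⟩ : ∃ i, G.dist x y = i + 1 :=
    ⟨G.dist x y - 1, by have := hG.pos_dist_of_ne hy.symm; omega⟩
  have hiD : i < D := by have := hD y; omega
  have hlap : (G.lapMatrix ℝ *ᵥ fun z ↦ q (G.dist x z)) y =
      ∑ z ∈ G.neighborFinset y, (fun t ↦ q (G.dist x y) - q t) (G.dist x z) := by
    rw [lapMatrix_mulVec_apply, sum_sub_distrib, sum_const, card_neighborFinset_eq_degree,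
      nsmul_eq_mul]
  rw [hlap, h.sum_neighborFinset_comp_dist y (φ := fun t ↦ q (G.dist x y) - q t) (sub_self _),
    hi, Nat.add_sub_cancel, nsmul_eq_mul, nsmul_eq_mul]
  have hdown := h.card_sphere_mul_down_mul_potential_sub hG hD hecc hiD
  have hup := h.card_sphere_mul_up_mul_potential_sub hG hD hecc (i := i + 1) hiD
  have htail :
      ∑ t ∈ Icc (i + 1) D, (s t : ℝ) =
        s (i + 1) + ∑ t ∈ Icc (i + 1 + 1) D, (s t : ℝ) := by
    rw [← add_sum_Ioc_eq_sum_Icc hiD, Icc_add_one_left_eq_Ioc]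
  have hs : (s (i + 1) : ℝ) ≠ 0 := by exact_mod_cast (h.card_sphere_pos hG hecc hiD).ne'
  apply mul_left_cancel₀ hs
  linear_combination hdown - hup + htail

theorem eq_potential_dist (h : G.IsDistanceRegularizedAt x s c b) (hG : G.Connected)
    (hD : ∀ y, G.dist x y ≤ D) (hecc : ∃ y, G.dist x y = D) {ν : V → ℝ} (hν0 : ν x = 0)
    (hνL : ∀ y, y ≠ x → (G.lapMatrix ℝ *ᵥ ν) y = 1) :
    ν = fun y ↦ levelPotential (Fintype.card V) s c (G.dist x y) :=
  hG.eq_of_lapMatrix_mulVec_eq_of_ne (by rw [hν0, dist_self, levelPotential_zero]) fun y hy ↦ by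
    rw [hνL y hy, h.lapMatrix_mulVec_potential_dist hG hD hecc hy]

theorem intersection_numbers_eq_of_equilibrium (h : G.IsDistanceRegularizedAt x s c b)
    (hG : G.Connected) (hD : ∀ y, G.dist x y ≤ D) (hecc : ∃ y, G.dist x y = D)
    {ν : V → ℝ} (hν0 : ν x = 0) (hνL : ∀ y, y ≠ x → (G.lapMatrix ℝ *ᵥ ν) y = 1)
    {i : ℕ} (hi : i < D) :
    let q := levelPotential (Fintype.card V) s c
    s i = Nat.card {y // ν y = q i} ∧
      (b i : ℝ) = (∑ j ∈ Icc (i + 1) D, (Nat.card {y // ν y = q j} : ℝ)) /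
        ((Nat.card {y // ν y = q i} : ℝ) * (q (i + 1) - q i)) ∧
      (c (i + 1) : ℝ) = (∑ j ∈ Icc (i + 1) D, (Nat.card {y // ν y = q j} : ℝ)) /
        ((Nat.card {y // ν y = q (i + 1)} : ℝ) * (q (i + 1) - q i)) := by
  intro q
  obtain rfl := h.eq_potential_dist hG hD hecc hν0 hνL
  have hm := fun j (hj : j ≤ D) ↦ h.natCard_potential_dist_eq hG hD hecc hj
  have hsum : ∑ j ∈ Icc (i + 1) D, (Nat.card {y // q (G.dist x y) = q j} : ℝ) =
      ∑ j ∈ Icc (i + 1) D, (s j : ℝ) :=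
    sum_congr rfl fun j hj ↦ by rw [hm j (mem_Icc.1 hj).2]
  have hΔ : q (i + 1) - q i ≠ 0 := (sub_pos.2 <| h.strictMonoOn_potential hG hD hecc
    (Set.mem_Iic.2 hi.le) (Set.mem_Iic.2 hi) (Nat.lt_succ_self i)).ne'
  have hs : ∀ j ≤ D, (s j : ℝ) ≠ 0 := fun j hj ↦ by
    exact_mod_cast (h.card_sphere_pos hG hecc hj).ne'
  refine ⟨(hm i hi.le).symm, ?_, ?_⟩
  · rw [hsum, hm i hi.le, eq_div_iff (mul_ne_zero (hs i hi.le) hΔ),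
      ← h.card_sphere_mul_up_mul_potential_sub hG hD hecc hi.le]
    ring
  · rw [hsum, hm (i + 1) hi, eq_div_iff (mul_ne_zero (hs (i + 1) hi) hΔ),
      ← h.card_sphere_mul_down_mul_potential_sub hG hD hecc hi]
    ring

end IsDistanceRegularizedAt

end SimpleGraph

theorem stmt10_general {V : Type} [Fintype V] [DecidableEq V]
    (G : SimpleGraph V) [DecidableRel G.Adj]
    (hconn : G.Connected) (hcard : 2 ≤ Fintype.card V)
    (σ : V → Fin 2)
    (c b : Fin 2 → ℕ → ℕ)
    (hc : ∀ (x y : V) (i : ℕ), G.dist x y = i →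
      (Finset.univ.filter (fun z => G.dist x z = i - 1 ∧ G.Adj y z)).card = c (σ x) i)
    (hb : ∀ (x y : V) (i : ℕ), G.dist x y = i →
      (Finset.univ.filter (fun z => G.dist x z = i + 1 ∧ G.Adj y z)).card = b (σ x) i)
    (D : Fin 2 → ℕ)
    (hDub : ∀ x y : V, G.dist x y ≤ D (σ x))
    (hDmax : ∀ ℓ : Fin 2, ∃ x y : V, σ x = ℓ ∧ G.dist x y = D ℓ)
    (kk : Fin 2 → ℕ → ℕ)
    (hkk : ∀ (x : V) (i : ℕ),
      (Finset.univ.filter (fun y => G.dist x y = i)).card = kk (σ x) i)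
    (ν : V → V → ℝ)
    (hν0 : ∀ x : V, ν x x = 0)
    (hνL : ∀ x y : V, y ≠ x →
      (G.degree y : ℝ) * ν x y - ∑ z ∈ G.neighborFinset y, ν x z = 1)
    (q : Fin 2 → ℕ → ℝ)
    (hq : ∀ (ℓ : Fin 2) (m : ℕ), q ℓ m = ∑ j ∈ Finset.Icc 1 m,
      ((Fintype.card V : ℝ) - ∑ t ∈ Finset.range j, (kk ℓ t : ℝ)) /
        ((kk ℓ j : ℝ) * (c ℓ j : ℝ))) :
    ∀ (x : V) (i : ℕ), i ≤ D (σ x) - 1 →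
      kk (σ x) i = Nat.card {y : V // ν x y = q (σ x) i} ∧
      (b (σ x) i : ℝ) =
        (∑ j ∈ Finset.Icc (i + 1) (D (σ x)),
          (Nat.card {y : V // ν x y = q (σ x) j} : ℝ)) /
        ((Nat.card {y : V // ν x y = q (σ x) i} : ℝ) * (q (σ x) (i + 1) - q (σ x) i)) ∧
      (c (σ x) (i + 1) : ℝ) =
        (∑ j ∈ Finset.Icc (i + 1) (D (σ x)),
          (Nat.card {y : V // ν x y = q (σ x) j} : ℝ)) /
        ((Nat.card {y : V // ν x y = q (σ x) (i + 1)} : ℝ) * (q (σ x) (i + 1) - q (σ x) i)) := by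
  intro x i hi
  have hreg : G.IsDistanceRegularizedAt x (kk (σ x)) (c (σ x)) (b (σ x)) := ⟨hkk x, hc x, hb x⟩
  have hecc : ∃ y, G.dist x y = D (σ x) := by
    obtain ⟨x', y', hx', hy'⟩ := hDmax (σ x)
    have hpos : 0 < #{y | G.dist x y = D (σ x)} := by
      rw [hkk x, ← hx', ← hkk x']
      exact card_pos.2 ⟨y', by simp [hy', hx']⟩
    obtain ⟨y, hy⟩ := card_pos.1 hpos
    exact ⟨y, (mem_filter.1 hy).2⟩
  have hiD : i < D (σ x) := by
    obtain ⟨y, hy⟩ := Fintype.exists_ne_of_one_lt_card hcard x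
    have := hconn.pos_dist_of_ne hy.symm
    have := hDub x y
    omega
  rw [show q (σ x) = levelPotential (Fintype.card V) (kk (σ x)) (c (σ x)) from
    funext (hq (σ x))]
  exact hreg.intersection_numbers_eq_of_equilibrium hconn (hDub x) hecc (hν0 x)
    (fun y hy ↦ by rw [lapMatrix_mulVec_apply]; exact hνL x y hy) hiD

theorem stmt10 {V : Type} [Fintype V] [DecidableEq V]
    (G : SimpleGraph V) [DecidableRel G.Adj]
    (hconn : G.Connected) (hcard : 2 ≤ Fintype.card V)
    (σ : V → Fin 2)
    (hbip : ∀ x y : V, G.Adj x y → σ x ≠ σ y)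
    (k : Fin 2 → ℕ)
    (hdeg : ∀ x : V, G.degree x = k (σ x))
    (c b : Fin 2 → ℕ → ℕ)
    (hc : ∀ (x y : V) (i : ℕ), G.dist x y = i →
      (Finset.univ.filter (fun z => G.dist x z = i - 1 ∧ G.Adj y z)).card = c (σ x) i)
    (hb : ∀ (x y : V) (i : ℕ), G.dist x y = i →
      (Finset.univ.filter (fun z => G.dist x z = i + 1 ∧ G.Adj y z)).card = b (σ x) i)
    (D : Fin 2 → ℕ)
    (hDub : ∀ x y : V, G.dist x y ≤ D (σ x))
    (hDmax : ∀ ℓ : Fin 2, ∃ x y : V, σ x = ℓ ∧ G.dist x y = D ℓ)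
    (hD0 : 1 ≤ D 0) (hD01 : D 0 ≤ D 1)
    (kk : Fin 2 → ℕ → ℕ)
    (hkk : ∀ (x : V) (i : ℕ),
      (Finset.univ.filter (fun y => G.dist x y = i)).card = kk (σ x) i)
    (ν : V → V → ℝ)
    (hν0 : ∀ x : V, ν x x = 0)
    (hνL : ∀ x y : V, y ≠ x →
      (G.degree y : ℝ) * ν x y - ∑ z ∈ G.neighborFinset y, ν x z = 1)
    (q : Fin 2 → ℕ → ℝ)
    (hq : ∀ (ℓ : Fin 2) (m : ℕ), q ℓ m = ∑ j ∈ Finset.Icc 1 m,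
      ((Fintype.card V : ℝ) - ∑ t ∈ Finset.range j, (kk ℓ t : ℝ)) /
        ((kk ℓ j : ℝ) * (c ℓ j : ℝ))) :
    ∀ (x : V) (i : ℕ), i ≤ D (σ x) - 1 →
      kk (σ x) i = Nat.card {y : V // ν x y = q (σ x) i} ∧
      (b (σ x) i : ℝ) =
        (∑ j ∈ Finset.Icc (i + 1) (D (σ x)),
          (Nat.card {y : V // ν x y = q (σ x) j} : ℝ)) /
        ((Nat.card {y : V // ν x y = q (σ x) i} : ℝ) * (q (σ x) (i + 1) - q (σ x) i)) ∧
      (c (σ x) (i + 1) : ℝ) =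
        (∑ j ∈ Finset.Icc (i + 1) (D (σ x)),
          (Nat.card {y : V // ν x y = q (σ x) j} : ℝ)) /
        ((Nat.card {y : V // ν x y = q (σ x) (i + 1)} : ℝ) * (q (σ x) (i + 1) - q (σ x) i)) :=
  stmt10_general G hconn hcard σ c b hc hb D hDub hDmax kk hkk ν hν0 hνL q hq
end

section
/- Let Γ be a distance-biregular graph with combinatorial Laplacian L, and let L^# be the group inverse of L. Then for every ℓ ∈ {0,1}, every y ∈ V_ℓ, and every vertex x, L^#(x,y) = (1/n)·Σ_{j=d(x,y)+1}^{D_ℓ} (n − B_{ℓ,j−1})/(k_{ℓ,j}·c_{ℓ,j}) − (1/n²)·Σ_{j=1}^{D_ℓ} B_{ℓ,j−1}·(n − B_{ℓ,j−1})/(k_{ℓ,j}·c_{ℓ,j}). -/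
/-!
`L^#` is the unique matrix `M` with `L M = I - J / n` and `𝟙ᵀ M = 0`: on a connected graph the
kernel of `L` consists of the constant vectors, which pins down first `L L^# = I - J / n` and
then `L^#` itself.

The candidate column `y` is radial, `M x y = F (d(x, y)) / n - C`. Since the graph is
distance-regular around `y`, `(L f)(x) = c_d (f_d - f_{d-1}) + b_d (f_d - f_{d+1})` for a radial
`f`, and the increments of `F` are chosen so that `k_j c_j (F_{j-1} - F_j) = n - B_{j-1}`. Together
with the double count `k_d b_d = k_{d+1} c_{d+1}` this telescopes to `(L M)(x, y) = δ_{xy} - 1/n`.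
The constant `C` makes the columns sum to zero.
-/

open Finset SimpleGraph

theorem Finset.sum_range_mul_sum_Icc_comm {R : Type*} [CommSemiring R] (u g : ℕ → R) (D : ℕ) :
    ∑ t ∈ range (D + 1), u t * ∑ j ∈ Icc (t + 1) D, g j =
      ∑ j ∈ Icc 1 D, (∑ t ∈ range j, u t) * g j := by
  simp only [mul_sum, sum_mul]
  exact sum_comm' fun t j ↦ by simp only [mem_range, mem_Icc]; omega

namespace SimpleGraph

open Matrix

variable {V : Type*} {G : SimpleGraph V}

lemma Walk.dist_getVert_of_length_eq_dist {u v : V} (p : G.Walk u v)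
    (hp : p.length = G.dist u v) {j : ℕ} (hj : j ≤ p.length) : G.dist u (p.getVert j) = j := by
  have hhead : G.dist u (p.getVert j) ≤ j := by simpa [hj] using dist_le (p.take j)
  have htail : G.dist (p.getVert j) v ≤ p.length - j := by simpa using dist_le (p.drop j)
  have := (p.take j).reachable.dist_triangle_left v
  omega

lemma Connected.exists_dist_eq_of_le_s13 (hconn : G.Connected) {u v : V} {j : ℕ}
    (hj : j ≤ G.dist u v) : ∃ w, G.dist u w = j := by
  obtain ⟨p, hp⟩ := hconn.exists_walk_length_eq_dist u v
  exact ⟨p.getVert j, p.dist_getVert_of_length_eq_dist hp (hp ▸ hj)⟩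

lemma Connected.exists_adj_dist_eq_sub_one (hconn : G.Connected) {u v : V}
    (h : G.dist u v ≠ 0) : ∃ w, G.Adj v w ∧ G.dist u w = G.dist u v - 1 := by
  obtain ⟨p, hp⟩ := hconn.exists_walk_length_eq_dist u v
  have hadj := p.adj_getVert_succ (i := p.length - 1) (by omega)
  rw [Nat.sub_add_cancel (by omega), p.getVert_length] at hadj
  exact ⟨_, hadj.symm, hp ▸ p.dist_getVert_of_length_eq_dist hp (by omega)⟩

section Laplacian

variable [Fintype V] [DecidableEq V] [DecidableRel G.Adj]

lemma const_vecMul_lapMatrix {R : Type*} [CommRing R] :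
    (fun _ ↦ 1) ᵥ* G.lapMatrix R = 0 := by
  rw [← (G.isSymm_lapMatrix (R := R)).eq, vecMul_transpose, lapMatrix_mulVec_const_eq_zero]

lemma Connected.eq_zero_of_lapMatrix_mul_eq_zero (hconn : G.Connected) {Q : Matrix V V ℝ}
    (hLQ : G.lapMatrix ℝ * Q = 0) (hQ : (fun _ ↦ 1) ᵥ* Q = 0) : Q = 0 := by
  ext a b
  have hcol : G.lapMatrix ℝ *ᵥ (fun i ↦ Q i b) = 0 := by
    ext i
    simpa [mulVec, dotProduct, mul_apply] using congrFun (congrFun hLQ i) b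
  have hconst : ∀ i, Q i b = Q a b := fun i ↦
    G.lapMatrix_mulVec_eq_zero_iff_forall_reachable.mp hcol i a (hconn i a)
  have hsum := congrFun hQ b
  simp only [vecMul, dotProduct, one_mul, hconst, sum_const, card_univ, nsmul_eq_mul,
    Pi.zero_apply] at hsum
  have : Nonempty V := ⟨a⟩
  simpa [Fintype.card_ne_zero] using hsum

theorem Connected.lapMatrix_groupInverse_eq (hconn : G.Connected) {L' M : Matrix V V ℝ}
    (h₁ : G.lapMatrix ℝ * L' * G.lapMatrix ℝ = G.lapMatrix ℝ)
    (h₂ : L' * G.lapMatrix ℝ * L' = L')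
    (h₃ : G.lapMatrix ℝ * L' = L' * G.lapMatrix ℝ)
    (hLM : G.lapMatrix ℝ * M = 1 - vecMulVec (fun _ ↦ 1) (fun _ ↦ (Fintype.card V : ℝ)⁻¹))
    (hM : (fun _ ↦ 1) ᵥ* M = 0) : L' = M := by
  set L := G.lapMatrix ℝ
  set N : Matrix V V ℝ := 1 - vecMulVec (fun _ ↦ 1) (fun _ ↦ (Fintype.card V : ℝ)⁻¹)
  have hLN : L * N = L := by
    rw [Matrix.mul_sub, Matrix.mul_one, mul_vecMulVec, lapMatrix_mulVec_const_eq_zero,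
      zero_vecMulVec, sub_zero]
  have hN : (fun _ ↦ 1) ᵥ* N = 0 := by
    have : Nonempty V := hconn.nonempty
    ext
    simp [N, Matrix.vecMul_sub, vecMul_vecMulVec, dotProduct]
  have hLL' : L * L' = N := by
    rw [← sub_eq_zero]
    apply hconn.eq_zero_of_lapMatrix_mul_eq_zero
    · rw [Matrix.mul_sub, hLN, h₃, ← Matrix.mul_assoc, h₁, sub_self]
    · rw [Matrix.vecMul_sub, ← vecMul_vecMul, const_vecMul_lapMatrix, zero_vecMul, hN, sub_self]
  have h1L' : (fun _ ↦ 1) ᵥ* L' = 0 := by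
    rw [← h₂, ← h₃, ← vecMul_vecMul, ← vecMul_vecMul, const_vecMul_lapMatrix, zero_vecMul,
      zero_vecMul]
  rw [← sub_eq_zero]
  apply hconn.eq_zero_of_lapMatrix_mul_eq_zero
  · rw [Matrix.mul_sub, hLL', hLM, sub_self]
  · rw [Matrix.vecMul_sub, h1L', hM, sub_self]

end Laplacian

variable [Fintype V]

lemma sum_comp_dist_eq {y : V} {kk : ℕ → ℕ} (hkk : ∀ i, #{x | G.dist y x = i} = kk i) {m : ℕ}
    (hm : ∀ x, G.dist y x < m) (f : ℕ → ℝ) :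
    ∑ x, f (G.dist y x) = ∑ t ∈ range m, kk t * f t := by
  rw [← sum_fiberwise_of_maps_to' (t := range m) (fun x _ ↦ mem_range.mpr (hm x))]
  simp [hkk]

lemma sum_range_kk_eq_card {y : V} {kk : ℕ → ℕ} (hkk : ∀ i, #{x | G.dist y x = i} = kk i)
    {m : ℕ} (hm : ∀ x, G.dist y x < m) : ∑ t ∈ range m, (kk t : ℝ) = Fintype.card V := by
  simpa using (sum_comp_dist_eq hkk hm fun _ ↦ 1).symm

lemma kk_zero_eq_one (hconn : G.Connected) {y : V} {kk : ℕ → ℕ}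
    (hkk : ∀ i, #{x | G.dist y x = i} = kk i) : kk 0 = 1 := by
  rw [← hkk, card_eq_one]
  exact ⟨y, by ext; simp [hconn.dist_eq_zero_iff, eq_comm]⟩

/-- `∑ t ∈ range j, kk t` is the paper's `B_{j-1}`, the size of the ball of radius `j - 1`. -/
noncomputable def sphereTerm (n : ℝ) (kk c : ℕ → ℕ) (j : ℕ) : ℝ :=
  (n - ∑ t ∈ range j, (kk t : ℝ)) / (kk j * c j)

noncomputable def tailSum (n : ℝ) (kk c : ℕ → ℕ) (D i : ℕ) : ℝ :=
  ∑ j ∈ Icc (i + 1) D, sphereTerm n kk c j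

noncomputable def greenEntry (n : ℝ) (kk c : ℕ → ℕ) (D d : ℕ) : ℝ :=
  1 / n * tailSum n kk c D d -
    1 / n ^ 2 * ∑ j ∈ Icc 1 D, (∑ t ∈ range j, (kk t : ℝ)) * sphereTerm n kk c j

lemma sum_greenEntry_comp_dist {y : V} {kk c : ℕ → ℕ} (hkk : ∀ i, #{x | G.dist y x = i} = kk i)
    {D : ℕ} (hD : ∀ x, G.dist y x ≤ D) :
    ∑ x, greenEntry (Fintype.card V) kk c D (G.dist y x) = 0 := by
  have hn : (Fintype.card V : ℝ) ≠ 0 := by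
    have : Nonempty V := ⟨y⟩
    exact_mod_cast Fintype.card_ne_zero
  have hball : ∀ x, G.dist y x < D + 1 := fun x ↦ Nat.lt_succ_of_le (hD x)
  set C := ∑ j ∈ Icc 1 D, (∑ t ∈ range j, (kk t : ℝ)) * sphereTerm (Fintype.card V) kk c j
  have hterm : ∀ t, (kk t : ℝ) * greenEntry (Fintype.card V) kk c D t =
      1 / Fintype.card V * (kk t * tailSum (Fintype.card V) kk c D t) -
        kk t * (1 / (Fintype.card V) ^ 2 * C) := fun t ↦ by unfold greenEntry; ring
  have hswap : ∑ t ∈ range (D + 1), (kk t : ℝ) * tailSum (Fintype.card V) kk c D t = C :=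
    sum_range_mul_sum_Icc_comm _ _ D
  rw [sum_comp_dist_eq hkk hball, sum_congr rfl fun t _ ↦ hterm t, sum_sub_distrib, ← mul_sum,
    ← sum_mul, hswap, sum_range_kk_eq_card hkk hball]
  field_simp
  ring

variable (G) in
structure IsDistanceRegularAround [DecidableRel G.Adj] (y : V) (c b : ℕ → ℕ) : Prop where
  card_closer : ∀ (x : V) (i : ℕ), G.dist y x = i → #{z | G.dist y z = i - 1 ∧ G.Adj x z} = c i
  card_farther : ∀ (x : V) (i : ℕ), G.dist y x = i → #{z | G.dist y z = i + 1 ∧ G.Adj x z} = b i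

namespace IsDistanceRegularAround

variable [DecidableRel G.Adj] {y : V} {c b kk : ℕ → ℕ}

lemma kk_mul_b_eq (h : G.IsDistanceRegularAround y c b)
    (hkk : ∀ i, #{x | G.dist y x = i} = kk i) (i : ℕ) :
    kk i * b i = kk (i + 1) * c (i + 1) := by
  rw [← hkk, ← hkk]
  refine card_mul_eq_card_mul G.Adj (fun x hx ↦ ?_) (fun z hz ↦ ?_)
  · rw [← h.card_farther x i (mem_filter.mp hx).2, bipartiteAbove, filter_filter]
  · rw [← h.card_closer z (i + 1) (mem_filter.mp hz).2, bipartiteBelow, filter_filter]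
    simp [G.adj_comm]

lemma c_ne_zero (h : G.IsDistanceRegularAround y c b) (hconn : G.Connected) {x : V}
    (hx : G.dist y x ≠ 0) : c (G.dist y x) ≠ 0 := by
  obtain ⟨w, hadj, hw⟩ := hconn.exists_adj_dist_eq_sub_one hx
  rw [← h.card_closer x _ rfl]
  exact card_ne_zero.mpr ⟨w, by simp [hadj, hw]⟩

lemma kk_mul_c_mul_sphereTerm (h : G.IsDistanceRegularAround y c b) (hconn : G.Connected)
    (hkk : ∀ i, #{x | G.dist y x = i} = kk i) {j : ℕ} (hj : j ≠ 0) :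
    (kk j * c j : ℝ) * sphereTerm (Fintype.card V) kk c j =
      Fintype.card V - ∑ t ∈ range j, (kk t : ℝ) := by
  -- if `kk j * c j = 0` then nothing lies at distance `j`, so the numerator vanishes as well
  refine mul_div_cancel_of_imp' fun hzero ↦ ?_
  have hfar : ∀ x, G.dist y x < j := by
    by_contra! hx
    obtain ⟨x, hx⟩ := hx
    obtain ⟨z, rfl⟩ := hconn.exists_dist_eq_of_le_s13 hx
    have hk : kk (G.dist y z) ≠ 0 := by rw [← hkk]; exact card_ne_zero.mpr ⟨z, by simp⟩
    simp [hk, h.c_ne_zero hconn hj] at hzero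
  rw [sum_range_kk_eq_card hkk hfar, sub_self]

lemma kk_mul_c_mul_tailSum_sub (h : G.IsDistanceRegularAround y c b) (hconn : G.Connected)
    (hkk : ∀ i, #{x | G.dist y x = i} = kk i) {D : ℕ} (hD : ∀ x, G.dist y x ≤ D) {j : ℕ}
    (hj : j ≠ 0) :
    (kk j * c j : ℝ) *
        (tailSum (Fintype.card V) kk c D (j - 1) - tailSum (Fintype.card V) kk c D j) =
      Fintype.card V - ∑ t ∈ range j, (kk t : ℝ) := by
  by_cases hjD : j ≤ D
  · rw [tailSum, tailSum, Nat.sub_add_cancel (Nat.one_le_iff_ne_zero.mpr hj),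
      ← insert_Icc_add_one_left_eq_Icc hjD, sum_insert (by simp), add_sub_cancel_right]
    exact h.kk_mul_c_mul_sphereTerm hconn hkk hj
  · rw [tailSum, tailSum, Icc_eq_empty (by omega), Icc_eq_empty (by omega), sub_self, mul_zero,
      sum_range_kk_eq_card hkk fun x ↦ by have := hD x; omega, sub_self]

lemma lapMatrix_mulVec_comp_dist [DecidableEq V] (h : G.IsDistanceRegularAround y c b)
    (f : ℕ → ℝ) (x : V) :
    (G.lapMatrix ℝ *ᵥ fun z ↦ f (G.dist y z)) x =
      c (G.dist y x) * (f (G.dist y x) - f (G.dist y x - 1)) +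
        b (G.dist y x) * (f (G.dist y x) - f (G.dist y x + 1)) := by
  have hstep : ∀ z ∈ G.neighborFinset x, f (G.dist y x) - f (G.dist y z) =
      (if G.dist y z = G.dist y x - 1 then f (G.dist y x) - f (G.dist y x - 1) else 0) +
        (if G.dist y z = G.dist y x + 1 then f (G.dist y x) - f (G.dist y x + 1) else 0) := by
    intro z hz
    have hzx := ((G.mem_neighborFinset x z).mp hz).diff_dist_adj (u := y)
    generalize G.dist y z = e at hzx ⊢
    generalize G.dist y x = d at hzx ⊢
    rcases hzx with rfl | rfl | rfl <;> split_ifs with h1 <;> first | omega | simp [← h1] | simp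
  rw [lapMatrix_mulVec_apply, ← card_neighborFinset_eq_degree, ← nsmul_eq_mul, ← sum_const,
    ← sum_sub_distrib, sum_congr rfl hstep, sum_add_distrib, sum_ite, sum_ite]
  simp only [sum_const, nsmul_eq_mul, mul_zero, add_zero, neighborFinset_eq_filter, filter_filter,
    ← h.card_closer x _ rfl, ← h.card_farther x _ rfl, and_comm]

lemma lapMatrix_mulVec_greenEntry_comp_dist [DecidableEq V] (h : G.IsDistanceRegularAround y c b)
    (hconn : G.Connected) (hkk : ∀ i, #{x | G.dist y x = i} = kk i) {D : ℕ}
    (hD : ∀ x, G.dist y x ≤ D) (x : V) :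
    (G.lapMatrix ℝ *ᵥ fun z ↦ greenEntry (Fintype.card V) kk c D (G.dist y z)) x =
      (if x = y then 1 else 0) - (Fintype.card V : ℝ)⁻¹ := by
  have hn : (Fintype.card V : ℝ) ≠ 0 := by
    have : Nonempty V := ⟨y⟩
    exact_mod_cast Fintype.card_ne_zero
  have hkx : (kk (G.dist y x) : ℝ) ≠ 0 := by
    rw [← hkk]
    exact_mod_cast card_ne_zero.mpr ⟨x, by simp⟩
  have hout := h.kk_mul_c_mul_tailSum_sub hconn hkk hD (j := G.dist y x + 1) (by omega)
  rw [Nat.add_sub_cancel, ← Nat.cast_mul, ← h.kk_mul_b_eq hkk, Nat.cast_mul,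
    sum_range_succ] at hout
  have hsub : ∀ d d', greenEntry (Fintype.card V) kk c D d - greenEntry (Fintype.card V) kk c D d'
      = (tailSum (Fintype.card V) kk c D d - tailSum (Fintype.card V) kk c D d') /
          Fintype.card V := fun d d' ↦ by unfold greenEntry; ring
  rw [h.lapMatrix_mulVec_comp_dist, hsub, hsub]
  refine mul_left_cancel₀ hkx ?_
  rcases eq_or_ne (G.dist y x) 0 with hx | hx
  · rw [if_pos (hconn.dist_eq_zero_iff.mp hx).symm]
    rw [hx, kk_zero_eq_one hconn hkk] at hout ⊢
    field_simp
    linear_combination hout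
  · have hin := h.kk_mul_c_mul_tailSum_sub hconn hkk hD hx
    rw [if_neg fun hxy ↦ hx (by rw [hxy, dist_self])]
    linear_combination (hout - hin) / (Fintype.card V : ℝ)

end IsDistanceRegularAround

end SimpleGraph

theorem stmt13_general {V : Type} [Fintype V] [DecidableEq V]
    (G : SimpleGraph V) [DecidableRel G.Adj]
    (hconn : G.Connected)
    (σ : V → Fin 2)
    (c b : Fin 2 → ℕ → ℕ)
    (hc : ∀ (x y : V) (i : ℕ), G.dist x y = i →
      (Finset.univ.filter (fun z => G.dist x z = i - 1 ∧ G.Adj y z)).card = c (σ x) i)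
    (hb : ∀ (x y : V) (i : ℕ), G.dist x y = i →
      (Finset.univ.filter (fun z => G.dist x z = i + 1 ∧ G.Adj y z)).card = b (σ x) i)
    (D : Fin 2 → ℕ)
    (hDub : ∀ x y : V, G.dist x y ≤ D (σ x))
    (kk : Fin 2 → ℕ → ℕ)
    (hkk : ∀ (x : V) (i : ℕ),
      (Finset.univ.filter (fun y => G.dist x y = i)).card = kk (σ x) i)
    (Lsharp : Matrix V V ℝ)
    (hLs1 : G.lapMatrix ℝ * Lsharp * G.lapMatrix ℝ = G.lapMatrix ℝ)
    (hLs2 : Lsharp * G.lapMatrix ℝ * Lsharp = Lsharp)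
    (hLs3 : G.lapMatrix ℝ * Lsharp = Lsharp * G.lapMatrix ℝ) :
    ∀ x y : V,
      Lsharp x y =
        (1 / (Fintype.card V : ℝ)) *
          ∑ j ∈ Finset.Icc (G.dist x y + 1) (D (σ y)),
            ((Fintype.card V : ℝ) - ∑ t ∈ Finset.range j, (kk (σ y) t : ℝ)) /
              ((kk (σ y) j : ℝ) * (c (σ y) j : ℝ)) -
        (1 / (Fintype.card V : ℝ) ^ 2) *
          ∑ j ∈ Finset.Icc 1 (D (σ y)),
            ((∑ t ∈ Finset.range j, (kk (σ y) t : ℝ)) *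
              ((Fintype.card V : ℝ) - ∑ t ∈ Finset.range j, (kk (σ y) t : ℝ))) /
              ((kk (σ y) j : ℝ) * (c (σ y) j : ℝ)) := by
  let M : Matrix V V ℝ := Matrix.of fun x y ↦
    greenEntry (Fintype.card V) (kk (σ y)) (c (σ y)) (D (σ y)) (G.dist y x)
  have hreg : ∀ y, G.IsDistanceRegularAround y (c (σ y)) (b (σ y)) := fun y ↦ ⟨hc y, hb y⟩
  have hLM : G.lapMatrix ℝ * M =
      1 - Matrix.vecMulVec (fun _ ↦ 1) (fun _ ↦ (Fintype.card V : ℝ)⁻¹) := by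
    ext x y
    simpa [M, Matrix.mul_apply, Matrix.mulVec, dotProduct, Matrix.one_apply,
      Matrix.vecMulVec_apply] using
      (hreg y).lapMatrix_mulVec_greenEntry_comp_dist hconn (hkk y) (hDub y) x
  have hM : Matrix.vecMul (fun _ ↦ 1) M = 0 := by
    ext y
    simpa [M, Matrix.vecMul, dotProduct] using
      sum_greenEntry_comp_dist (c := c (σ y)) (hkk y) (hDub y)
  intro x y
  rw [hconn.lapMatrix_groupInverse_eq hLs1 hLs2 hLs3 hLM hM, dist_comm]
  simp [M, greenEntry, tailSum, sphereTerm, mul_div_assoc]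

theorem stmt13 {V : Type} [Fintype V] [DecidableEq V]
    (G : SimpleGraph V) [DecidableRel G.Adj]
    (hconn : G.Connected) (hcard : 2 ≤ Fintype.card V)
    (σ : V → Fin 2)
    (hbip : ∀ x y : V, G.Adj x y → σ x ≠ σ y)
    (k : Fin 2 → ℕ)
    (hdeg : ∀ x : V, G.degree x = k (σ x))
    (c b : Fin 2 → ℕ → ℕ)
    (hc : ∀ (x y : V) (i : ℕ), G.dist x y = i →
      (Finset.univ.filter (fun z => G.dist x z = i - 1 ∧ G.Adj y z)).card = c (σ x) i)
    (hb : ∀ (x y : V) (i : ℕ), G.dist x y = i →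
      (Finset.univ.filter (fun z => G.dist x z = i + 1 ∧ G.Adj y z)).card = b (σ x) i)
    (D : Fin 2 → ℕ)
    (hDub : ∀ x y : V, G.dist x y ≤ D (σ x))
    (hDmax : ∀ ℓ : Fin 2, ∃ x y : V, σ x = ℓ ∧ G.dist x y = D ℓ)
    (hD0 : 1 ≤ D 0) (hD01 : D 0 ≤ D 1)
    (kk : Fin 2 → ℕ → ℕ)
    (hkk : ∀ (x : V) (i : ℕ),
      (Finset.univ.filter (fun y => G.dist x y = i)).card = kk (σ x) i)
    (Lsharp : Matrix V V ℝ)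
    (hLs1 : G.lapMatrix ℝ * Lsharp * G.lapMatrix ℝ = G.lapMatrix ℝ)
    (hLs2 : Lsharp * G.lapMatrix ℝ * Lsharp = Lsharp)
    (hLs3 : G.lapMatrix ℝ * Lsharp = Lsharp * G.lapMatrix ℝ) :
    ∀ x y : V,
      Lsharp x y =
        (1 / (Fintype.card V : ℝ)) *
          ∑ j ∈ Finset.Icc (G.dist x y + 1) (D (σ y)),
            ((Fintype.card V : ℝ) - ∑ t ∈ Finset.range j, (kk (σ y) t : ℝ)) /
              ((kk (σ y) j : ℝ) * (c (σ y) j : ℝ)) -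
        (1 / (Fintype.card V : ℝ) ^ 2) *
          ∑ j ∈ Finset.Icc 1 (D (σ y)),
            ((∑ t ∈ Finset.range j, (kk (σ y) t : ℝ)) *
              ((Fintype.card V : ℝ) - ∑ t ∈ Finset.range j, (kk (σ y) t : ℝ))) /
              ((kk (σ y) j : ℝ) * (c (σ y) j : ℝ)) :=
  stmt13_general G hconn σ c b hc hb D hDub kk hkk Lsharp hLs1 hLs2 hLs3
end
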